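/- Combining the two essential-norm bounds: if Ω is a bounded domain in ℂⁿ such that (a) Toeplitz operators with compactly supported bounded symbols are compact, (b) k_z → 0 weakly at bΩ, and (c) the Berezin boundary-limit property holds on a dense subset of bΩ, then for every ψ ∈ C(Ω̄), ‖T_ψ‖_e = sup{|ψ(p)| : p ∈ bΩ}. -/

import Mathlib

open scoped InnerProductSpace Topology
open Filter

variable {n : ℕ} {L : Type*} [NormedAddCommGroup L] [InnerProductSpace ℂ L] [CompleteSpace L]

/-- The Toeplitz operator `T_φ = P ∘ M_φ ∘ ι` on the Bergman space `A`. -/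
noncomputable def toeplitz (A : Submodule ℂ L) [CompleteSpace A]
    (M : ((Fin n → ℂ) → ℂ) → (L →L[ℂ] L)) (φ : (Fin n → ℂ) → ℂ) : A →L[ℂ] A :=
  ((A.orthogonalProjection).comp (M φ)).comp A.subtypeL

/-- The essential norm `‖T‖_e = inf {‖T − S‖ : S compact}` of a bounded operator. -/
noncomputable def essNorm {A : Type*} [NormedAddCommGroup A] [NormedSpace ℂ A]
    (T : A →L[ℂ] A) : ℝ :=
  sInf {r | ∃ S : A →L[ℂ] A, IsCompactOperator ⇑S ∧ r = ‖T - S‖}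

set_option linter.unusedSectionVars false in
lemma tendsto_inner_compact (Ω : Set (Fin n → ℂ)) (A : Submodule ℂ L) [CompleteSpace A]
    (κ : (Fin n → ℂ) → A) (hκ : ∀ z ∈ Ω, ‖κ z‖ = 1) (p : Fin n → ℂ)
    (hweak : ∀ f : A, Tendsto (fun z => (⟪κ z, f⟫_ℂ : ℂ)) (𝓝[Ω] p) (𝓝 0))
    (S : A →L[ℂ] A) (hS : IsCompactOperator ⇑S) :
    Tendsto (fun z => (⟪κ z, S (κ z)⟫_ℂ : ℂ)) (𝓝[Ω] p) (𝓝 0) := by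
  rw [Metric.tendsto_nhds]
  intro ε hε
  obtain ⟨K, hK, hK0⟩ := hS
  obtain ⟨r, hr, hball⟩ := Metric.mem_nhds_iff.mp hK0
  set c : ℝ := r / 2 with hc
  have hc0 : 0 < c := by positivity
  have hmem : ∀ z ∈ Ω, S ((c : ℂ) • κ z) ∈ K := by
    intro z hz
    apply hball
    rw [Metric.mem_ball, dist_zero_right, norm_smul, hκ z hz]
    rw [Complex.norm_real, Real.norm_eq_abs, abs_of_pos hc0]
    rw [mul_one, hc]
    linarith
  set ε' : ℝ := c * ε / 3 with hε'def
  have hε'0 : 0 < ε' := by positivity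
  obtain ⟨t, htfin, htcover⟩ := Metric.totallyBounded_iff.mp hK.totallyBounded ε' hε'0
  have hsum : Tendsto (fun z => ∑ y ∈ htfin.toFinset, ‖(⟪κ z, y⟫_ℂ : ℂ)‖) (𝓝[Ω] p) (𝓝 0) := by
    have h := tendsto_finset_sum (f := fun y z => ‖(⟪κ z, y⟫_ℂ : ℂ)‖) htfin.toFinset
      (fun y _ => ((hweak y).norm))
    simpa using h
  filter_upwards [hsum.eventually_lt_const hε'0, self_mem_nhdsWithin] with z hsz hzΩ
  rw [dist_zero_right]
  obtain ⟨y, hyt, hyd⟩ := Set.mem_iUnion₂.mp (htcover (hmem z hzΩ))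
  have key : c * ‖(⟪κ z, S (κ z)⟫_ℂ : ℂ)‖ = ‖(⟪κ z, S ((c : ℂ) • κ z)⟫_ℂ : ℂ)‖ := by
    rw [map_smul, inner_smul_right]
    rw [norm_mul, Complex.norm_real, Real.norm_eq_abs, abs_of_pos hc0]
  have hb1 : ‖(⟪κ z, S ((c : ℂ) • κ z) - y⟫_ℂ : ℂ)‖ ≤ ε' := by
    calc ‖(⟪κ z, S ((c : ℂ) • κ z) - y⟫_ℂ : ℂ)‖ ≤ ‖κ z‖ * ‖S ((c : ℂ) • κ z) - y‖ :=
          norm_inner_le_norm _ _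
      _ ≤ 1 * ε' := by
          apply mul_le_mul (le_of_eq (hκ z hzΩ)) _ (norm_nonneg _) zero_le_one
          rw [← dist_eq_norm]
          exact le_of_lt (Metric.mem_ball.mp hyd)
      _ = ε' := one_mul _
  have hb2 : ‖(⟪κ z, y⟫_ℂ : ℂ)‖ ≤ ε' := by
    refine le_trans ?_ (le_of_lt hsz)
    exact Finset.single_le_sum (f := fun y => ‖(⟪κ z, y⟫_ℂ : ℂ)‖)
      (fun i _ => norm_nonneg _) (htfin.mem_toFinset.mpr hyt)
  have : c * ‖(⟪κ z, S (κ z)⟫_ℂ : ℂ)‖ ≤ 2 * ε' := by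
    rw [key]
    calc ‖(⟪κ z, S ((c : ℂ) • κ z)⟫_ℂ : ℂ)‖
        = ‖(⟪κ z, (S ((c : ℂ) • κ z) - y) + y⟫_ℂ : ℂ)‖ := by rw [sub_add_cancel]
      _ ≤ ‖(⟪κ z, S ((c : ℂ) • κ z) - y⟫_ℂ : ℂ)‖ + ‖(⟪κ z, y⟫_ℂ : ℂ)‖ := by
          rw [inner_add_right]; exact norm_add_le _ _
      _ ≤ 2 * ε' := by linarith
  have h23 : ‖(⟪κ z, S (κ z)⟫_ℂ : ℂ)‖ ≤ 2 * ε / 3 := by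
    rw [hε'def] at this
    nlinarith [norm_nonneg ((⟪κ z, S (κ z)⟫_ℂ : ℂ))]
  linarith


/-- If `Ω` is a bounded domain in `ℂⁿ` such that (a) Toeplitz operators whose symbols
vanish on a neighborhood of `bΩ` are compact, (b) the normalized Bergman kernels
`κ_z ∈ A²(Ω)` (unit vectors) tend weakly to `0` at `bΩ`, and (c) the Berezin
boundary-limit property `lim_{z→p} φ̃(z) = φ(p)` holds for all `φ ∈ C(Ω̄)` at every
point of a subset `Γ` dense in `bΩ`, then for every `ψ ∈ C(Ω̄)`,
`‖T_ψ‖_e = sup {|ψ(p)| : p ∈ bΩ}`. -/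
theorem essNorm_toeplitz_eq (Ω : Set (Fin n → ℂ)) (hΩ : Bornology.IsBounded Ω)
    (A : Submodule ℂ L) [CompleteSpace A]
    (M : ((Fin n → ℂ) → ℂ) → (L →L[ℂ] L))
    (hMadd : ∀ φ ψ : (Fin n → ℂ) → ℂ, M (φ + ψ) = M φ + M ψ)
    (hMnorm : ∀ (φ : (Fin n → ℂ) → ℂ) (C : ℝ), (∀ z ∈ Ω, ‖φ z‖ ≤ C) → ‖M φ‖ ≤ C)
    (hcompact : ∀ φ : (Fin n → ℂ) → ℂ,
      (∃ U : Set (Fin n → ℂ), IsOpen U ∧ frontier Ω ⊆ U ∧ ∀ x ∈ U, φ x = 0) →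
      IsCompactOperator ⇑(toeplitz A M φ))
    (κ : (Fin n → ℂ) → A) (hκ : ∀ z ∈ Ω, ‖κ z‖ = 1)
    (hweak : ∀ p ∈ frontier Ω, ∀ f : A,
      Filter.Tendsto (fun z => (⟪κ z, f⟫_ℂ : ℂ)) (𝓝[Ω] p) (𝓝 0))
    (Γ : Set (Fin n → ℂ)) (hΓ : Γ ⊆ frontier Ω) (hΓdense : frontier Ω ⊆ closure Γ)
    (hBLP : ∀ φ : (Fin n → ℂ) → ℂ, ContinuousOn φ (closure Ω) → ∀ p ∈ Γ,
      Filter.Tendsto (fun z => (⟪κ z, toeplitz A M φ (κ z)⟫_ℂ : ℂ)) (𝓝[Ω] p) (𝓝 (φ p)))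
    (ψ : (Fin n → ℂ) → ℂ) (hψ : ContinuousOn ψ (closure Ω)) :
    essNorm (toeplitz A M ψ) = sSup ((fun p => ‖ψ p‖) '' frontier Ω) := by
  classical
  set T := toeplitz A M ψ with hT
  set Msup := sSup ((fun p => ‖ψ p‖) '' frontier Ω) with hMsup
  have hfrcl : frontier Ω ⊆ closure Ω := frontier_subset_closure
  have hclΩ : IsCompact (closure Ω) := hΩ.isCompact_closure
  have hfrcpt : IsCompact (frontier Ω) :=
    hclΩ.of_isClosed_subset isClosed_frontier hfrcl
  have himg : IsCompact ((fun p => ‖ψ p‖) '' frontier Ω) :=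
    hfrcpt.image_of_continuousOn (hψ.norm.mono hfrcl)
  have hMsup0 : 0 ≤ Msup := by
    rcases (frontier Ω).eq_empty_or_nonempty with h | ⟨p, hp⟩
    · simp [hMsup, h, Real.sSup_empty]
    · exact le_trans (norm_nonneg (ψ p)) (le_csSup himg.bddAbove ⟨p, hp, rfl⟩)
  have hsetne : {r | ∃ S : A →L[ℂ] A, IsCompactOperator ⇑S ∧ r = ‖T - S‖}.Nonempty :=
    ⟨‖T - 0‖, 0, isCompactOperator_zero, rfl⟩
  have hbdd : BddBelow {r | ∃ S : A →L[ℂ] A, IsCompactOperator ⇑S ∧ r = ‖T - S‖} :=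
    ⟨0, by rintro r ⟨S, -, rfl⟩; exact norm_nonneg (T - S)⟩
  refine le_antisymm ?_ ?_
  · -- upper bound
    refine le_of_forall_pos_le_add fun ε hε => ?_
    set W : Set (Fin n → ℂ) := closure Ω ∩ (fun z => ‖ψ z‖) ⁻¹' Set.Ici (Msup + ε) with hW
    have hWcl : IsClosed W :=
      (hψ.norm).preimage_isClosed_of_isClosed isClosed_closure isClosed_Ici
    have hfrU : frontier Ω ⊆ Wᶜ := by
      intro p hp
      intro hpW
      have h1 : ‖ψ p‖ ≤ Msup := le_csSup himg.bddAbove ⟨p, hp, rfl⟩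
      have h2 : Msup + ε ≤ ‖ψ p‖ := hpW.2
      linarith
    obtain ⟨V, hVopen, hfrV, hVU⟩ :=
      normal_exists_closure_subset isClosed_frontier hWcl.isOpen_compl hfrU
    obtain ⟨f, hf0, hf1, hf01⟩ := exists_continuous_zero_one_of_isClosed
      (s := W) (t := closure V) hWcl isClosed_closure
      (Set.disjoint_left.mpr fun x hx hxv => (hVU hxv) hx)
    set ψ₂ : (Fin n → ℂ) → ℂ := fun z => (f z : ℂ) * ψ z with hψ₂
    set ψ₁ : (Fin n → ℂ) → ℂ := fun z => ψ z - ψ₂ z with hψ₁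
    have hψsum : ψ₁ + ψ₂ = ψ := by funext z; simp [hψ₁]
    have hTsplit : T = toeplitz A M ψ₁ + toeplitz A M ψ₂ := by
      rw [hT, ← hψsum]
      simp only [toeplitz, hMadd, ContinuousLinearMap.comp_add, ContinuousLinearMap.add_comp]
    have hcpt1 : IsCompactOperator ⇑(toeplitz A M ψ₁) := by
      refine hcompact ψ₁ ⟨V, hVopen, hfrV, fun x hx => ?_⟩
      have hfx : f x = 1 := hf1 (subset_closure hx)
      simp [hψ₁, hψ₂, hfx]
    have hsymb : ∀ z ∈ Ω, ‖ψ₂ z‖ ≤ Msup + ε := by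
      intro z hz
      by_cases hzW : z ∈ W
      · have hfz : f z = 0 := hf0 hzW
        simp only [hψ₂, hfz, Complex.ofReal_zero, zero_mul, norm_zero]
        linarith
      · have hzcl : z ∈ closure Ω := subset_closure hz
        have hlt : ‖ψ z‖ < Msup + ε := by
          by_contra h
          exact hzW ⟨hzcl, le_of_not_gt h⟩
        have hf1' : ‖(f z : ℂ)‖ ≤ 1 := by
          rw [Complex.norm_real, Real.norm_eq_abs, abs_of_nonneg (hf01 z).1]
          exact (hf01 z).2
        calc ‖ψ₂ z‖ = ‖(f z : ℂ)‖ * ‖ψ z‖ := norm_mul _ _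
          _ ≤ 1 * (Msup + ε) :=
              mul_le_mul hf1' (le_of_lt hlt) (norm_nonneg _) zero_le_one
          _ = Msup + ε := one_mul _
    have hnorm2 : ‖toeplitz A M ψ₂‖ ≤ Msup + ε := by
      have hM : ‖M ψ₂‖ ≤ Msup + ε := hMnorm ψ₂ _ hsymb
      have hP : ‖(A.orthogonalProjection : L →L[ℂ] A)‖ ≤ 1 := Submodule.orthogonalProjectionOnto_norm_le A
      have hι : ‖A.subtypeL‖ ≤ 1 := Submodule.norm_subtypeL_le A
      have h1 := ContinuousLinearMap.opNorm_comp_le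
        ((A.orthogonalProjection).comp (M ψ₂)) A.subtypeL
      have h2 := ContinuousLinearMap.opNorm_comp_le (A.orthogonalProjection) (M ψ₂)
      have hn1 : (0:ℝ) ≤ ‖A.subtypeL‖ := norm_nonneg A.subtypeL
      have hn2 : (0:ℝ) ≤ ‖M ψ₂‖ := norm_nonneg (M ψ₂)
      have hn3 : (0:ℝ) ≤ ‖(A.orthogonalProjection).comp (M ψ₂)‖ :=
        norm_nonneg ((A.orthogonalProjection).comp (M ψ₂))
      have heq : toeplitz A M ψ₂ = ((A.orthogonalProjection).comp (M ψ₂)).comp A.subtypeL := rfl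
      rw [heq]
      nlinarith [hP, hι, hM, hMsup0, hε]
    calc essNorm T ≤ ‖T - toeplitz A M ψ₁‖ :=
          csInf_le hbdd ⟨toeplitz A M ψ₁, hcpt1, rfl⟩
      _ = ‖toeplitz A M ψ₂‖ := by rw [hTsplit, add_sub_cancel_left]
      _ ≤ Msup + ε := hnorm2
  · -- lower bound
    refine le_csInf hsetne ?_
    rintro r ⟨S, hScpt, rfl⟩
    have key : ∀ p ∈ Γ, ‖ψ p‖ ≤ ‖T - S‖ := by
      intro p hp
      have hpfr : p ∈ frontier Ω := hΓ hp
      have hne : (𝓝[Ω] p).NeBot :=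
        mem_closure_iff_nhdsWithin_neBot.mp (hfrcl hpfr)
      have hTlim := hBLP ψ hψ p hp
      have hSlim := tendsto_inner_compact Ω A κ hκ p (fun f => hweak p hpfr f) S hScpt
      have hlim : Tendsto (fun z => (⟪κ z, (T - S) (κ z)⟫_ℂ : ℂ)) (𝓝[Ω] p) (𝓝 (ψ p)) := by
        have h := hTlim.sub hSlim
        simpa [ContinuousLinearMap.sub_apply, inner_sub_right] using h
      refine le_of_tendsto hlim.norm ?_
      filter_upwards [self_mem_nhdsWithin] with z hz
      calc ‖(⟪κ z, (T - S) (κ z)⟫_ℂ : ℂ)‖ ≤ ‖κ z‖ * ‖(T - S) (κ z)‖ :=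
            norm_inner_le_norm _ _
        _ ≤ ‖κ z‖ * (‖T - S‖ * ‖κ z‖) :=
            mul_le_mul_of_nonneg_left ((T - S).le_opNorm _) (norm_nonneg _)
        _ = ‖T - S‖ := by rw [hκ z hz]; ring
    have keyfr : ∀ p ∈ frontier Ω, ‖ψ p‖ ≤ ‖T - S‖ := by
      intro p hp
      have hne : (𝓝[Γ] p).NeBot :=
        mem_closure_iff_nhdsWithin_neBot.mp (hΓdense hp)
      have hcont : Tendsto (fun q => ‖ψ q‖) (𝓝[Γ] p) (𝓝 ‖ψ p‖) :=
        (((hψ p (hfrcl hp)).mono (hΓ.trans hfrcl)).norm : ContinuousWithinAt _ _ _)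
      refine le_of_tendsto hcont ?_
      filter_upwards [self_mem_nhdsWithin] with q hq using key q hq
    refine Real.sSup_le ?_ (norm_nonneg _)
    rintro x ⟨p, hp, rfl⟩
    exact keyfr p hp
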